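/- Let F be a strictly balanced graph with k vertices and l edges, and let F_{i_1}, …, F_{i_j} be j ≥ 2 pairwise distinct subgraphs of a common graph, each isomorphic to F, such that the union of their vertex sets has t vertices with k ≤ t < j·k. Then k·e(F_{i_1} ∪ … ∪ F_{i_j}) ≥ t·l + 1, where the union denotes the graph whose edge set is the union of the edge sets of the F_{i_v}. -/

import Mathlib

open MeasureTheory Filter Asymptotics

/-- Vertices of the complete distance graph `G(n, n/2, n/4)`: 0/1-vectors of length `n`
(encoded as the set of coordinates equal to 1) with exactly `n/2` ones. -/
def DV (n : ℕ) : Type := {s : Finset (Fin n) // s.card = n / 2}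

instance (n : ℕ) : Fintype (DV n) := by unfold DV; infer_instance
instance (n : ℕ) : DecidableEq (DV n) := by unfold DV; infer_instance

/-- The complete distance graph: two vertices are adjacent iff their Euclidean inner
product (= cardinality of the intersection of the corresponding sets) equals `n/4`. -/
def distGraph (n : ℕ) : SimpleGraph (DV n) where
  Adj x y := x ≠ y ∧ (x.1 ∩ y.1).card = n / 4
  symm := ⟨fun x y h => ⟨h.1.symm, by rw [Finset.inter_comm]; exact h.2⟩⟩
  loopless := ⟨fun x h => h.1 rfl⟩

/-- `N = C(n, n/2)`, the number of vertices of the distance graph. -/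
def NN (n : ℕ) : ℕ := n.choose (n / 2)

/-- `N₁ = C(n/2, n/4)²`, the common degree of the vertices of the distance graph. -/
def NN1 (n : ℕ) : ℕ := ((n / 2).choose (n / 4)) ^ 2

/-- Bernoulli measure on `Bool` with parameter `p` (clipped to `[0,1]`). -/
noncomputable def bern (p : ℝ) : Measure Bool :=
  (PMF.bernoulli (min (Real.toNNReal p) 1) (min_le_right _ _)).toMeasure

instance (p : ℝ) : SigmaFinite (bern p) := by unfold bern; infer_instance

/-- The law of the random distance graph `G_p`: each (potential) edge is kept
independently with probability `p`. -/
noncomputable def gpMeasure (n : ℕ) (p : ℝ) : Measure (Sym2 (DV n) → Bool) :=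
  Measure.pi fun _ => bern p

/-- The random spanning subgraph of the distance graph determined by the coin flips `ω`. -/
def randSubgraph (n : ℕ) (ω : Sym2 (DV n) → Bool) : SimpleGraph (DV n) where
  Adj x y := (distGraph n).Adj x y ∧ ω s(x, y) = true
  symm := ⟨fun x y h => ⟨(distGraph n).symm.symm x y h.1, by rw [Sym2.eq_swap]; exact h.2⟩⟩
  loopless := ⟨fun x h => (distGraph n).loopless.irrefl x h.1⟩

/-- `G` contains a subgraph isomorphic to `F` (a copy of `F`). -/
def ContainsCopy {α β : Type} (F : SimpleGraph α) (G : SimpleGraph β) : Prop :=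
  ∃ f : α → β, Function.Injective f ∧ ∀ ⦃a b⦄, F.Adj a b → G.Adj (f a) (f b)

/-- `X_F`: the number of subgraphs of `G` isomorphic to `F`. -/
noncomputable def copyCount {α β : Type} (F : SimpleGraph α) (G : SimpleGraph β) : ℕ :=
  Nat.card {H : G.Subgraph // Nonempty (F ≃g H.coe)}

/-- The number of monomorphisms (injective graph homomorphisms) of `F` into `G`. -/
noncomputable def monoCount {α β : Type} (F : SimpleGraph α) (G : SimpleGraph β) : ℕ :=
  Nat.card {f : α → β // Function.Injective f ∧ ∀ ⦃a b⦄, F.Adj a b → G.Adj (f a) (f b)}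

/-- Maximal density `ρ^max(F)`: the maximum of `e(H)/v(H)` over nonempty subgraphs `H ⊆ F`. -/
noncomputable def rhoMax {α : Type} [Fintype α] (F : SimpleGraph α) : ℝ :=
  ⨆ H : {H : F.Subgraph // H.verts.Nonempty},
    (H.1.edgeSet.ncard : ℝ) / (H.1.verts.ncard : ℝ)

/-- `F` is strictly balanced: `e(H)/v(H) < e(F)/v(F)` for every proper nonempty subgraph. -/
def StrictlyBalanced {α : Type} [Fintype α] (F : SimpleGraph α) : Prop :=
  ∀ H : F.Subgraph, H.verts.Nonempty → H ≠ ⊤ →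
    H.edgeSet.ncard * Fintype.card α < F.edgeSet.ncard * H.verts.ncard

section Stmt13Aux
open SimpleGraph

set_option linter.unusedSectionVars false
section StmtAux
variable {α γ : Type} [Fintype α] [Fintype γ] {F : SimpleGraph α} {G : SimpleGraph γ}

private lemma verts_eq_range (H : G.Subgraph) (φ : F ≃g H.coe) :
    H.verts = Set.range (fun a => (φ a : γ)) := by
  ext x
  constructor
  · intro hx
    exact ⟨φ.symm ⟨x, hx⟩, by simp⟩
  · rintro ⟨a, rfl⟩
    exact (φ a).2

private lemma verts_ncard_iso (H : G.Subgraph) (φ : F ≃g H.coe) :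
    H.verts.ncard = Fintype.card α := by
  rw [← Nat.card_coe_set_eq, ← Nat.card_eq_fintype_card]
  exact (Nat.card_congr φ.toEquiv).symm

private lemma edgeSet_eq_image (H : G.Subgraph) (φ : F ≃g H.coe) :
    H.edgeSet = Sym2.map (fun a => (φ a : γ)) '' F.edgeSet := by
  ext e
  induction e using Sym2.ind with
  | _ x y =>
    constructor
    · intro hxy
      rw [Subgraph.mem_edgeSet] at hxy
      have hx : x ∈ H.verts := H.edge_vert hxy
      have hy : y ∈ H.verts := H.edge_vert hxy.symm
      refine ⟨s(φ.symm ⟨x, hx⟩, φ.symm ⟨y, hy⟩), ?_, by simp⟩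
      rw [SimpleGraph.mem_edgeSet]
      have : H.coe.Adj ⟨x, hx⟩ ⟨y, hy⟩ := hxy
      simpa using φ.symm.map_adj_iff.mpr this
    · rintro ⟨e', he', hmap⟩
      rw [← hmap]; clear hmap
      revert he'
      induction e' using Sym2.ind with
      | _ a b =>
        intro he'
        rw [SimpleGraph.mem_edgeSet] at he'
        have : H.coe.Adj (φ a) (φ b) := φ.map_adj_iff.mpr he'
        simpa [Subgraph.mem_edgeSet] using this

private lemma edgeSet_ncard_iso (H : G.Subgraph) (φ : F ≃g H.coe) :
    H.edgeSet.ncard = F.edgeSet.ncard := by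
  rw [edgeSet_eq_image H φ]
  exact Set.ncard_image_of_injective _ (Sym2.map.injective (Subtype.val_injective.comp φ.injective))

private lemma copy_le_eq (H₁ H₂ : G.Subgraph) (φ₁ : F ≃g H₁.coe) (φ₂ : F ≃g H₂.coe)
    (h : H₁ ≤ H₂) : H₁ = H₂ := by
  have h1 : H₁.verts = H₂.verts :=
    Set.eq_of_subset_of_ncard_le h.1
      (by rw [verts_ncard_iso H₁ φ₁, verts_ncard_iso H₂ φ₂])
  have h2 : H₁.edgeSet = H₂.edgeSet :=
    Set.eq_of_subset_of_ncard_le (Subgraph.edgeSet_mono h)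
      (by rw [edgeSet_ncard_iso _ φ₁, edgeSet_ncard_iso _ φ₂])
  exact Subgraph.ext h1 (by ext x y; rw [← Subgraph.mem_edgeSet, ← Subgraph.mem_edgeSet, h2])

private lemma key (hbal : StrictlyBalanced F) (H : G.Subgraph) (φ : F ≃g H.coe)
    (D : G.Subgraph) (hD : D ≤ H) :
    Fintype.card α * D.edgeSet.ncard ≤ F.edgeSet.ncard * D.verts.ncard ∧
      (D.verts.Nonempty → D ≠ H →
        Fintype.card α * D.edgeSet.ncard + 1 ≤ F.edgeSet.ncard * D.verts.ncard) := by
  classical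
  set g : α → γ := fun a => (φ a : γ) with hgdef
  have hginj : Function.Injective g := Subtype.val_injective.comp φ.injective
  set D' : F.Subgraph :=
    { verts := {a | g a ∈ D.verts}
      Adj := fun a b => D.Adj (g a) (g b)
      adj_sub := fun {a b} h => φ.map_adj_iff.mp (hD.2 h)
      edge_vert := fun {a b} h => D.edge_vert h
      symm := ⟨fun a b h => D.symm.symm _ _ h⟩ } with hD'def
  have hverts : D.verts = g '' D'.verts := by
    ext x
    constructor
    · intro hx
      refine ⟨φ.symm ⟨x, hD.1 hx⟩, ?_, ?_⟩
      · show g (φ.symm ⟨x, hD.1 hx⟩) ∈ D.verts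
        simpa [g] using hx
      · simp [g]
    · rintro ⟨a, ha, rfl⟩
      exact ha
  have hedges : D.edgeSet = Sym2.map g '' D'.edgeSet := by
    ext e
    induction e using Sym2.ind with
    | _ x y =>
      constructor
      · intro hxy
        rw [Subgraph.mem_edgeSet] at hxy
        have hx : x ∈ H.verts := hD.1 (D.edge_vert hxy)
        have hy : y ∈ H.verts := hD.1 (D.edge_vert hxy.symm)
        have hgx : g (φ.symm ⟨x, hx⟩) = x := by simp [g]
        have hgy : g (φ.symm ⟨y, hy⟩) = y := by simp [g]
        refine ⟨s(φ.symm ⟨x, hx⟩, φ.symm ⟨y, hy⟩), ?_, by simp [hgx, hgy]⟩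
        rw [Subgraph.mem_edgeSet]
        show D.Adj (g (φ.symm ⟨x, hx⟩)) (g (φ.symm ⟨y, hy⟩))
        rw [hgx, hgy]; exact hxy
      · rintro ⟨e', he', hmap⟩
        rw [← hmap]; clear hmap
        revert he'
        induction e' using Sym2.ind with
        | _ a b =>
          intro he'
          rw [Subgraph.mem_edgeSet] at he'
          simpa [Subgraph.mem_edgeSet] using he'
  have hvcard : D'.verts.ncard = D.verts.ncard := by
    rw [hverts, Set.ncard_image_of_injective _ hginj]
  have hecard : D'.edgeSet.ncard = D.edgeSet.ncard := by
    rw [hedges, Set.ncard_image_of_injective _ (Sym2.map.injective hginj)]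
  by_cases hne : D.verts.Nonempty
  · by_cases htop : D' = ⊤
    · have hDH : D = H := by
        have h1 : D.verts = H.verts := by
          rw [hverts, htop, Subgraph.verts_top, Set.image_univ, ← verts_eq_range H φ]
        have h2 : D.edgeSet = H.edgeSet := by
          rw [hedges, htop, Subgraph.edgeSet_top, ← edgeSet_eq_image H φ]
        exact Subgraph.ext h1
          (by ext x y; rw [← Subgraph.mem_edgeSet, ← Subgraph.mem_edgeSet, h2])
      have hv : D.verts.ncard = Fintype.card α := by rw [hDH]; exact verts_ncard_iso H φ
      have he : D.edgeSet.ncard = F.edgeSet.ncard := by rw [hDH]; exact edgeSet_ncard_iso H φ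
      refine ⟨by rw [hv, he, Nat.mul_comm], fun _ hne' => absurd hDH hne'⟩
    · have hne' : D'.verts.Nonempty := by
        rw [hverts] at hne
        exact hne.of_image
      have hb := hbal D' hne' htop
      rw [hvcard, hecard, Nat.mul_comm] at hb
      exact ⟨hb.le, fun _ _ => hb⟩
  · have hverts0 : D.verts = ∅ := Set.not_nonempty_iff_eq_empty.mp hne
    have hedge0 : D.edgeSet = ∅ := by
      ext e
      induction e using Sym2.ind with
      | _ x y =>
        simp only [Subgraph.mem_edgeSet, Set.mem_empty_iff_false, iff_false]
        intro h
        have := D.edge_vert h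
        rw [hverts0] at this
        exact this
    exact ⟨by simp [hedge0], fun h => absurd h hne⟩

private lemma exists_pair {j k : ℕ} (c : Fin j → G.Subgraph)
    (hcard : ∀ v, (c v).verts.ncard = k)
    (h : (⋃ v, (c v).verts).ncard < j * k) :
    ∃ a b, a ≠ b ∧ ((c a).verts ∩ (c b).verts).Nonempty := by
  classical
  by_contra hcon
  push_neg at hcon
  have hdisj : ∀ a b : Fin j, a ≠ b →
      Disjoint ((c a).verts.toFinset) ((c b).verts.toFinset) := by
    intro a b hab
    rw [Finset.disjoint_left]
    intro x hxa hxb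
    rw [Set.mem_toFinset] at hxa hxb
    exact (Set.eq_empty_iff_forall_notMem.mp (hcon a b hab) x) ⟨hxa, hxb⟩
  have hUeq : (⋃ v, (c v).verts) = ↑(Finset.univ.biUnion fun v => (c v).verts.toFinset) := by
    rw [Finset.coe_biUnion]
    simp [Set.coe_toFinset]
  rw [hUeq, Set.ncard_coe_finset,
    Finset.card_biUnion (fun a _ b _ hab => hdisj a b hab)] at h
  have hcards : ∀ v : Fin j, ((c v).verts.toFinset).card = k := fun v => by
    rw [← Set.ncard_eq_toFinset_card']; exact hcard v
  simp only [hcards, Finset.sum_const, Finset.card_univ, Fintype.card_fin, smul_eq_mul] at h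
  omega

private lemma arith_base (k l eS eI vS vI : ℕ) (h1 : eS + eI = l + l)
    (h2 : vS + vI = k + k) (h3 : k * eI + 1 ≤ l * vI) : vS * l + 1 ≤ k * eS := by
  have a1 : k * (eS + eI) = k * (l + l) := by rw [h1]
  have a2 : (vS + vI) * l = (k + k) * l := by rw [h2]
  have a3 : l * vI = vI * l := Nat.mul_comm _ _
  rw [Nat.mul_add, Nat.mul_add] at a1
  rw [Nat.add_mul, Nat.add_mul] at a2
  have a4 : k * l = l * k := Nat.mul_comm _ _
  have a5 : l * k = k * l := Nat.mul_comm _ _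
  omega

private lemma arith_step (k l eS eI eU vS vI vU : ℕ) (h1 : eS + eI = eU + l)
    (h2 : vS + vI = vU + k) (h3 : k * eI ≤ l * vI) (h4 : vU * l + 1 ≤ k * eU) :
    vS * l + 1 ≤ k * eS := by
  have a1 : k * (eS + eI) = k * (eU + l) := by rw [h1]
  have a2 : (vS + vI) * l = (vU + k) * l := by rw [h2]
  have a3 : l * vI = vI * l := Nat.mul_comm _ _
  rw [Nat.mul_add, Nat.mul_add] at a1
  rw [Nat.add_mul, Nat.add_mul] at a2
  omega

end StmtAux


/-- If `F` is strictly balanced with `k` vertices and `l` edges and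
`F_{i_1}, …, F_{i_j}` (`j ≥ 2`) are pairwise distinct copies of `F` in a common graph
whose vertex sets together have `t` vertices with `k ≤ t < j·k`, then
`k·e(F_{i_1} ∪ … ∪ F_{i_j}) ≥ t·l + 1`. -/
theorem stmt13 {α γ : Type} [Fintype α] [Fintype γ] (F : SimpleGraph α)
    (k l : ℕ) (hk : Fintype.card α = k) (hl : F.edgeSet.ncard = l)
    (hbal : StrictlyBalanced F) (G : SimpleGraph γ) (j : ℕ) (hj : 2 ≤ j)
    (c : Fin j → G.Subgraph) (hcinj : Function.Injective c)
    (hiso : ∀ v, Nonempty (F ≃g (c v).coe))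
    (t : ℕ) (ht : (⋃ v, (c v).verts).ncard = t) (htk : k ≤ t) (htjk : t < j * k) :
    t * l + 1 ≤ k * (⨆ v, c v).edgeSet.ncard := by
  classical
  have hvc : ∀ v, (c v).verts.ncard = k := fun v => by
    rw [verts_ncard_iso (c v) (hiso v).some, hk]
  have hec : ∀ v, (c v).edgeSet.ncard = l := fun v => by
    rw [edgeSet_ncard_iso (c v) (hiso v).some, hl]
  obtain ⟨a, b, hab, hmeet⟩ := exists_pair c hvc (by rw [ht]; exact htjk)
  have h0 : 0 < j := by omega
  have h1 : 1 < j := by omega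
  set z : Fin j := ⟨0, h0⟩ with hz
  set o : Fin j := ⟨1, h1⟩ with ho
  have hzo : z ≠ o := by simp [hz, ho, Fin.ext_iff]
  set τ : Equiv.Perm (Fin j) := Equiv.swap z a with hτ
  set b₀ : Fin j := τ.symm b with hb₀
  have hτz : τ z = a := Equiv.swap_apply_left z a
  have hτb₀ : τ b₀ = b := Equiv.apply_symm_apply τ b
  have hb₀z : b₀ ≠ z := by
    intro h
    apply hab
    rw [← hτz, ← h, hτb₀]
  set σ : Equiv.Perm (Fin j) := (Equiv.swap o b₀).trans τ with hσ
  have hσz : σ z = a := by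
    have h' : Equiv.swap o b₀ z = z :=
      Equiv.swap_apply_of_ne_of_ne hzo (Ne.symm hb₀z)
    simp only [hσ, Equiv.trans_apply, h', hτz]
  have hσo : σ o = b := by
    simp only [hσ, Equiv.trans_apply, Equiv.swap_apply_left, hτb₀]
  set d : Fin j → G.Subgraph := fun v => c (σ v) with hd
  have hdinj : Function.Injective d := hcinj.comp σ.injective
  have hdvc : ∀ v, (d v).verts.ncard = k := fun v => hvc _
  have hdec : ∀ v, (d v).edgeSet.ncard = l := fun v => hec _
  have hdiso : ∀ v, Nonempty (F ≃g (d v).coe) := fun v => hiso _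
  have hmeet' : ((d z).verts ∩ (d o).verts).Nonempty := by
    show ((c (σ z)).verts ∩ (c (σ o)).verts).Nonempty
    rw [hσz, hσo]; exact hmeet
  set f : ℕ → G.Subgraph := fun m => ⨆ v : Fin j, ⨆ _ : (v : ℕ) < m, d v with hf
  have hf2 : f 2 = d z ⊔ d o := by
    apply le_antisymm
    · refine iSup_le fun v => iSup_le fun hv => ?_
      have hcase : v = z ∨ v = o := by
        have : (v : ℕ) = 0 ∨ (v : ℕ) = 1 := by omega
        rcases this with h | h
        · exact Or.inl (Fin.ext h)
        · exact Or.inr (Fin.ext h)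
      rcases hcase with rfl | rfl
      exacts [le_sup_left, le_sup_right]
    · refine sup_le ?_ ?_
      · exact le_iSup_of_le z (le_iSup (fun _ => d z) (show ((z : Fin j) : ℕ) < 2 by
          rw [hz]; norm_num))
      · exact le_iSup_of_le o (le_iSup (fun _ => d o) (show ((o : Fin j) : ℕ) < 2 by
          rw [ho]; norm_num))
  have hstep : ∀ m (hm : m < j), f (m + 1) = f m ⊔ d ⟨m, hm⟩ := by
    intro m hm
    apply le_antisymm
    · refine iSup_le fun v => iSup_le fun hv => ?_
      rcases Nat.lt_succ_iff_lt_or_eq.mp hv with h | h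
      · exact le_sup_of_le_left (le_iSup_of_le v (le_iSup (fun _ => d v) h))
      · have : v = ⟨m, hm⟩ := Fin.ext h
        rw [this]; exact le_sup_right
    · refine sup_le (iSup_le fun v => iSup_le fun hv =>
        le_iSup_of_le v (le_iSup (fun _ => d v) (Nat.lt_succ_of_lt hv))) ?_
      exact le_iSup_of_le ⟨m, hm⟩ (le_iSup (fun _ => d ⟨m, hm⟩) (Nat.lt_succ_self m))
  have hfj : f j = ⨆ v, c v := by
    have h' : f j = ⨆ v, d v :=
      le_antisymm (iSup_le fun v => iSup_le fun _ => le_iSup d v)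
        (iSup_le fun v => le_iSup_of_le v (le_iSup (fun _ => d v) v.isLt))
    rw [h']
    exact Equiv.iSup_comp (g := c) σ
  have hcount : ∀ U W : G.Subgraph,
      ((U ⊔ W).edgeSet.ncard + (U ⊓ W).edgeSet.ncard
        = U.edgeSet.ncard + W.edgeSet.ncard) ∧
      ((U ⊔ W).verts.ncard + (U ⊓ W).verts.ncard
        = U.verts.ncard + W.verts.ncard) := by
    intro U W
    constructor
    · rw [Subgraph.edgeSet_sup, Subgraph.edgeSet_inf]
      exact Set.ncard_union_add_ncard_inter _ _
    · rw [Subgraph.verts_sup, Subgraph.verts_inf]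
      exact Set.ncard_union_add_ncard_inter _ _
  have main : ∀ m, 2 ≤ m → m ≤ j →
      (f m).verts.ncard * l + 1 ≤ k * (f m).edgeSet.ncard := by
    intro m
    induction m with
    | zero => intro h2 _; omega
    | succ n ih =>
      intro h2 hle
      rcases Nat.eq_or_lt_of_le h2 with heq | hlt
      · -- base case : n + 1 = 2
        have hn : n + 1 = 2 := heq.symm
        rw [hn, hf2]
        have hDle : d z ⊓ d o ≤ d o := inf_le_right
        have hDne : (d z ⊓ d o).verts.Nonempty := by
          rw [Subgraph.verts_inf]; exact hmeet'
        have hDneq : d z ⊓ d o ≠ d o := by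
          intro h
          have hle' : d o ≤ d z := by rw [← h]; exact inf_le_left
          have heqc := copy_le_eq (d o) (d z) (hdiso o).some (hdiso z).some hle'
          exact hzo (hdinj heqc).symm
        have hkey := (key hbal (d o) (hdiso o).some _ hDle).2 hDne hDneq
        rw [hk, hl] at hkey
        obtain ⟨hce, hcv⟩ := hcount (d z) (d o)
        rw [hdec z, hdec o] at hce
        rw [hdvc z, hdvc o] at hcv
        exact arith_base k l _ _ _ _ hce hcv hkey
      · -- step case
        have hn2 : 2 ≤ n := by omega
        have hnj : n < j := by omega
        have ihn := ih hn2 (by omega)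
        rw [hstep n hnj]
        have hkey := (key hbal (d ⟨n, hnj⟩) (hdiso _).some _
          (inf_le_right : f n ⊓ d ⟨n, hnj⟩ ≤ _)).1
        rw [hk, hl] at hkey
        obtain ⟨hce, hcv⟩ := hcount (f n) (d ⟨n, hnj⟩)
        rw [hdec ⟨n, hnj⟩] at hce
        rw [hdvc ⟨n, hnj⟩] at hcv
        exact arith_step k l _ _ _ _ _ _ hce hcv hkey ihn
  have hfin := main j hj le_rfl
  rw [hfj] at hfin
  have hvU : (⨆ v, c v).verts.ncard = t := by rw [Subgraph.verts_iSup, ht]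
  rw [hvU] at hfin
  exact hfin

end Stmt13Aux
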